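/- arXiv:2107.07889 — 6 statements merged into one kernel-verified Lean document; each statement's English description precedes it below -/
import Mathlib

section
/- Let f(x) = ln(1+|x|). For all x, y ≥ 0, f(√(x²+y²))² ≤ f(x)² + f(y)². -/
noncomputable def f (x : ℝ) : ℝ := Real.log (1 + |x|)

noncomputable def gAux (s : ℝ) : ℝ := Real.log (1 + s) / (s * (1 + s))

noncomputable def FAux (u : ℝ) : ℝ := Real.log (1 + Real.sqrt u) ^ 2

lemma log_lb {s : ℝ} (hs : 0 < s) : s / (1 + s) ≤ Real.log (1 + s) := by
  have h := Real.one_sub_inv_le_log_of_pos (x := 1 + s) (by linarith)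
  have : 1 - (1 + s)⁻¹ = s / (1 + s) := by field_simp; ring
  linarith [this ▸ h]

lemma hasDerivAt_gAux {s : ℝ} (hs : 0 < s) :
    HasDerivAt gAux ((s - (1 + 2 * s) * Real.log (1 + s)) / (s * (1 + s)) ^ 2) s := by
  have h1s : (0:ℝ) < 1 + s := by linarith
  have h1 : HasDerivAt (fun t : ℝ => Real.log (1 + t)) (1 + s)⁻¹ s := by
    have := (Real.hasDerivAt_log h1s.ne').comp s ((hasDerivAt_id s).const_add 1)
    simpa [Function.comp_def] using this
  have h2 : HasDerivAt (fun t : ℝ => t * (1 + t)) (1 * (1 + s) + s * 1) s :=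
    (hasDerivAt_id s).mul ((hasDerivAt_id s).const_add 1)
  have hne : s * (1 + s) ≠ 0 := by positivity
  have := h1.div h2 hne
  convert this using 1
  · rfl
  · rfl
  · rfl
  field_simp
  ring

lemma gAux_anti : AntitoneOn gAux (Set.Ioi (0:ℝ)) := by
  apply antitoneOn_of_deriv_nonpos (convex_Ioi 0)
  · intro s hs
    exact (hasDerivAt_gAux hs).continuousAt.continuousWithinAt
  · rw [interior_Ioi]
    intro s hs
    exact (hasDerivAt_gAux hs).differentiableAt.differentiableWithinAt
  · rw [interior_Ioi]
    intro s hs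
    rw [(hasDerivAt_gAux hs).deriv]
    apply div_nonpos_of_nonpos_of_nonneg _ (by positivity)
    have hs' : (0:ℝ) < s := hs
    have hlb := log_lb hs'
    have h1s : (0:ℝ) < 1 + s := by linarith
    have h2 : (0:ℝ) < 1 + 2 * s := by linarith
    have : (1 + 2 * s) * (s / (1 + s)) ≤ (1 + 2 * s) * Real.log (1 + s) :=
      mul_le_mul_of_nonneg_left hlb h2.le
    have hs2 : s ≤ (1 + 2 * s) * (s / (1 + s)) := by
      rw [← mul_div_assoc, le_div_iff₀ h1s]
      nlinarith
    linarith

lemma hasDerivAt_FAux {u : ℝ} (hu : 0 < u) :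
    HasDerivAt FAux (gAux (Real.sqrt u)) u := by
  have hsq : 0 < Real.sqrt u := Real.sqrt_pos.2 hu
  have h1s : (0:ℝ) < 1 + Real.sqrt u := by linarith
  have hsqrt : HasDerivAt Real.sqrt (1 / (2 * Real.sqrt u)) u :=
    Real.hasDerivAt_sqrt hu.ne'
  have hlog : HasDerivAt (fun t : ℝ => Real.log (1 + Real.sqrt t))
      ((1 + Real.sqrt u)⁻¹ * (1 / (2 * Real.sqrt u))) u := by
    have := (Real.hasDerivAt_log h1s.ne').comp u (hsqrt.const_add 1)
    simpa [Function.comp_def] using this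
  have := hlog.pow 2
  convert this using 1
  · rfl
  · rfl
  · rfl
  unfold gAux
  field_simp
  ring

lemma FAux_concave : ConcaveOn ℝ (Set.Ici (0:ℝ)) FAux := by
  apply AntitoneOn.concaveOn_of_deriv (convex_Ici 0)
  · apply ContinuousOn.pow
    apply ContinuousOn.log
    · exact (continuous_const.add Real.continuous_sqrt).continuousOn
    · intro x _
      have := Real.sqrt_nonneg x
      positivity
  · rw [interior_Ici]
    intro u hu
    exact (hasDerivAt_FAux hu).differentiableAt.differentiableWithinAt
  · rw [interior_Ici]
    intro u hu v hv huv
    rw [(hasDerivAt_FAux hu).deriv, (hasDerivAt_FAux hv).deriv]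
    exact gAux_anti (Real.sqrt_pos.2 hu) (Real.sqrt_pos.2 hv)
      (Real.sqrt_le_sqrt huv)

lemma FAux_zero : FAux 0 = 0 := by simp [FAux]

lemma FAux_subadd {u v : ℝ} (hu : 0 ≤ u) (hv : 0 ≤ v) :
    FAux (u + v) ≤ FAux u + FAux v := by
  rcases eq_or_lt_of_le hu with rfl | hu'
  · simp [FAux_zero]
  rcases eq_or_lt_of_le hv with rfl | hv'
  · simp [FAux_zero]
  have huv : 0 < u + v := by linarith
  have key : ∀ a b : ℝ, 0 < a → 0 < b → a + b = u + v →
      (a / (u + v)) * FAux (u + v) ≤ FAux a := by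
    intro a b ha hb hab
    have h1 := FAux_concave.2 (Set.mem_Ici.2 huv.le) (Set.mem_Ici.2 (le_refl (0:ℝ)))
      (show (0:ℝ) ≤ a / (u + v) by positivity) (show (0:ℝ) ≤ b / (u + v) by positivity)
      (show a / (u + v) + b / (u + v) = 1 by field_simp; linarith)
    simp only [smul_eq_mul, mul_zero, add_zero, FAux_zero] at h1
    have : a / (u + v) * (u + v) = a := by field_simp
    rwa [this] at h1
  have h1 := key u v hu' hv' rfl
  have h2 := key v u hv' hu' (by ring)
  have : (u / (u + v)) * FAux (u + v) + (v / (u + v)) * FAux (u + v) = FAux (u + v) := by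
    field_simp
  linarith

theorem f_sqrt_sq (x y : ℝ) (hx : 0 ≤ x) (hy : 0 ≤ y) :
    f (Real.sqrt (x ^ 2 + y ^ 2)) ^ 2 ≤ f x ^ 2 + f y ^ 2 := by
  have h1 : f (Real.sqrt (x ^ 2 + y ^ 2)) ^ 2 = FAux (x ^ 2 + y ^ 2) := by
    rw [f, FAux, abs_of_nonneg (Real.sqrt_nonneg _)]
  have h2 : f x ^ 2 = FAux (x ^ 2) := by
    rw [f, FAux, abs_of_nonneg hx, Real.sqrt_sq hx]
  have h3 : f y ^ 2 = FAux (y ^ 2) := by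
    rw [f, FAux, abs_of_nonneg hy, Real.sqrt_sq hy]
  rw [h1, h2, h3]
  exact FAux_subadd (by positivity) (by positivity)
end

section
/- For every x > 0, (2 ln(1+x))/(1+x) > (√2 ln(1+√2 x))/(1+√2 x). -/
theorem h_pos (x : ℝ) (hx : 0 < x) :
    Real.sqrt 2 * Real.log (1 + Real.sqrt 2 * x) / (1 + Real.sqrt 2 * x) <
      2 * Real.log (1 + x) / (1 + x) := by
  have hs2 : (1:ℝ) < Real.sqrt 2 := by
    rw [show (1:ℝ) = Real.sqrt 1 by simp]
    exact Real.sqrt_lt_sqrt (by norm_num) (by norm_num)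
  have hs2pos : (0:ℝ) < Real.sqrt 2 := by linarith
  have h1x : (0:ℝ) < 1 + x := by linarith
  have h1sx : (0:ℝ) < 1 + Real.sqrt 2 * x := by nlinarith
  have hlogpos : 0 < Real.log (1 + x) := Real.log_pos (by linarith)
  -- Bernoulli: 1 + √2 x < (1+x)^√2
  have hb : 1 + Real.sqrt 2 * x < (1 + x) ^ (Real.sqrt 2 : ℝ) :=
    one_add_mul_self_lt_rpow_one_add (by linarith) (ne_of_gt hx) hs2
  have hlog : Real.log (1 + Real.sqrt 2 * x) < Real.sqrt 2 * Real.log (1 + x) := by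
    have := Real.log_lt_log h1sx hb
    rwa [Real.log_rpow h1x] at this
  have key : Real.sqrt 2 * Real.log (1 + Real.sqrt 2 * x) < 2 * Real.log (1 + x) := by
    have h2 : Real.sqrt 2 * Real.sqrt 2 = 2 := Real.mul_self_sqrt (by norm_num)
    nlinarith
  have hlt : (1:ℝ) + x < 1 + Real.sqrt 2 * x := by nlinarith
  calc Real.sqrt 2 * Real.log (1 + Real.sqrt 2 * x) / (1 + Real.sqrt 2 * x)
      < 2 * Real.log (1 + x) / (1 + Real.sqrt 2 * x) := by gcongr
      _ ≤ 2 * Real.log (1 + x) / (1 + x) := by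
        apply div_le_div_of_nonneg_left (by linarith) h1x hlt.le
end

section
/- Let f(x) = ln(1+|x|) applied coordinatewise, let y, z ∈ ℝⁿ, and let ζ ∈ (0,1). If for every coordinate i with yᵢ·zᵢ ≤ 0 we have |zᵢ| ≤ ζ|yᵢ|, then ∑ᵢ f(yᵢ+zᵢ)² ≥ (1−ζ)² ∑ᵢ f(yᵢ)². -/
lemma f_nonneg (x : ℝ) : 0 ≤ f x := by
  unfold f
  apply Real.log_nonneg
  linarith [abs_nonneg x]

lemma f_mono {a b : ℝ} (h : |a| ≤ |b|) : f a ≤ f b := by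
  unfold f
  apply Real.log_le_log (by linarith [abs_nonneg a]) (by linarith)

lemma key (ζ a b : ℝ) (hζ0 : 0 < ζ) (hζ1 : ζ < 1)
    (h : a * b ≤ 0 → |b| ≤ ζ * |a|) : (1 - ζ) * f a ≤ f (a + b) := by
  by_cases hs : a * b ≤ 0
  · have hb := h hs
    have h1 : (1 - ζ) * |a| ≤ |a + b| := by
      have h2 : |a| - |b| ≤ |a + b| := by
        have := abs_sub_abs_le_abs_sub a (-b); simpa using this
      linarith
    have hbern : (1 + |a|) ^ (1 - ζ : ℝ) ≤ 1 + (1 - ζ) * |a| :=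
      rpow_one_add_le_one_add_mul_self (by linarith [abs_nonneg a]) (by linarith) (by linarith)
    have hpos : (0:ℝ) < 1 + |a| := by linarith [abs_nonneg a]
    calc (1 - ζ) * f a = Real.log ((1 + |a|) ^ (1 - ζ : ℝ)) := by
          rw [Real.log_rpow hpos]; unfold f; ring
      _ ≤ Real.log (1 + (1 - ζ) * |a|) :=
          Real.log_le_log (Real.rpow_pos_of_pos hpos _) hbern
      _ ≤ f (a + b) := by
          unfold f
          apply Real.log_le_log (by nlinarith [abs_nonneg a]) (by linarith)
  · push_neg at hs
    have h1 : |a| ≤ |a + b| := by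
      rcases le_or_gt 0 a with ha | ha
      · rcases le_or_gt 0 b with hb | hb
        · rw [abs_of_nonneg ha, abs_of_nonneg (by linarith)]; linarith
        · nlinarith
      · rcases le_or_gt 0 b with hb | hb
        · nlinarith
        · rw [abs_of_neg ha, abs_of_neg (by linarith)]; linarith
    have := f_mono h1
    nlinarith [f_nonneg a]

theorem f_lower_no_cancel (n : ℕ) (y z : Fin n → ℝ) (ζ : ℝ)
    (hζ0 : 0 < ζ) (hζ1 : ζ < 1)
    (h : ∀ i, y i * z i ≤ 0 → |z i| ≤ ζ * |y i|) :
    (1 - ζ) ^ 2 * ∑ i, f (y i) ^ 2 ≤ ∑ i, f (y i + z i) ^ 2 := by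
  rw [Finset.mul_sum]
  apply Finset.sum_le_sum
  intro i _
  have hk := key ζ (y i) (z i) hζ0 hζ1 (h i)
  have h1 : (0:ℝ) ≤ (1 - ζ) * f (y i) := by
    have := f_nonneg (y i); nlinarith
  nlinarith [f_nonneg (y i), f_nonneg (y i + z i)]
end

section
/- Let a₁,…,aₘ be real numbers and let ε₁,…,εₘ be independent Rademacher random variables (uniform on {−1,1}). Then there is an absolute constant C > 0 such that E[ f(∑ᵢ εᵢaᵢ)² ] ≤ C·∑ᵢ f(aᵢ)², where f(x) = ln(1+|x|). -/
-- exp lower bound: 1 + s^2 ≤ exp s for s ≥ 0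
lemma exp_ge_one_add_sq {s : ℝ} (hs : 0 ≤ s) : 1 + s ^ 2 ≤ Real.exp s := by
  have h := Real.sum_le_exp_of_nonneg hs 4
  have hsum : ∑ i ∈ Finset.range 4, s ^ i / i.factorial = 1 + s + s^2/2 + s^3/6 := by
    simp [Finset.sum_range_succ, Nat.factorial]
    try ring
  rw [hsum] at h
  nlinarith [sq_nonneg (s - 3), sq_nonneg s]

-- log(1+t)^2 ≤ t for t ≥ 0
lemma log_sq_le {t : ℝ} (ht : 0 ≤ t) : Real.log (1 + t) ^ 2 ≤ t := by
  set s := Real.sqrt t with hs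
  have hs0 : 0 ≤ s := Real.sqrt_nonneg t
  have hss : s ^ 2 = t := Real.sq_sqrt ht
  have h1 : (1 : ℝ) + t ≤ Real.exp s := by rw [← hss]; exact exp_ge_one_add_sq hs0
  have h2 : Real.log (1 + t) ≤ s := by
    calc Real.log (1 + t) ≤ Real.log (Real.exp s) :=
          Real.log_le_log (by linarith) h1
      _ = s := Real.log_exp s
  have h3 : 0 ≤ Real.log (1 + t) := Real.log_nonneg (by linarith)
  nlinarith

lemma f_le_abs (x : ℝ) : f x ≤ |x| := by
  have h := Real.log_le_sub_one_of_pos (x := 1 + |x|) (by positivity)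
  simpa [f] using h

lemma f_subadd (x y : ℝ) : f (x + y) ≤ f x + f y := by
  unfold f
  rw [← Real.log_mul (by positivity) (by positivity)]
  apply Real.log_le_log (by positivity)
  have := abs_add_le x y
  nlinarith [abs_nonneg x, abs_nonneg y]

lemma f_lb_small {x : ℝ} (hx : |x| ≤ 1) : Real.log 2 * |x| ≤ f x := by
  have hconv := convexOn_exp.2 (Set.mem_univ (0:ℝ)) (Set.mem_univ (Real.log 2))
    (by linarith [abs_nonneg x] : (0:ℝ) ≤ 1 - |x|) (abs_nonneg x) (by ring)
  simp only [smul_eq_mul, mul_zero, zero_add, Real.exp_zero,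
    Real.exp_log (by norm_num : (0:ℝ) < 2)] at hconv
  have h2 : Real.exp (|x| * Real.log 2) ≤ 1 + |x| := by linarith
  have := Real.log_le_log (Real.exp_pos _) h2
  rw [Real.log_exp] at this
  unfold f; linarith

lemma f_lb_big {x : ℝ} (hx : 1 < |x|) : Real.log 2 ≤ f x :=
  (Real.log_le_log (by norm_num) (by linarith) : Real.log 2 ≤ _)

lemma orth {m : ℕ} {i j : Fin m} (hij : i ≠ j) :
    ∑ ε : Fin m → Bool, ((if ε i then (1:ℝ) else -1) * (if ε j then (1:ℝ) else -1)) = 0 := by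
  set F : (Fin m → Bool) → ℝ := fun ε => (if ε i then (1:ℝ) else -1) * (if ε j then (1:ℝ) else -1) with hF
  have hinv : Function.Involutive (fun ε : Fin m → Bool => Function.update ε i (!ε i)) := by
    intro ε; funext k
    by_cases hk : k = i
    · subst hk; simp [Function.update_apply]
    · simp [Function.update_apply, hk]
  have hsum := Equiv.sum_comp (Function.Involutive.toPerm _ hinv) F
  have hneg : ∀ ε : Fin m → Bool, F ((Function.Involutive.toPerm _ hinv) ε) = - F ε := by
    intro ε
    have h1 : (Function.update ε i (!ε i)) i = !ε i := by simp
    have h2 : (Function.update ε i (!ε i)) j = ε j := by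
      simp [Function.update_apply, hij.symm]
    simp only [hF, Function.Involutive.coe_toPerm, h1, h2]
    cases ε i <;> cases ε j <;> simp
  rw [Finset.sum_congr rfl (fun ε _ => hneg ε), Finset.sum_neg_distrib] at hsum
  linarith

lemma sum_sq_eq {m : ℕ} (b : Fin m → ℝ) :
    ∑ ε : Fin m → Bool, (∑ i, (if ε i then (1:ℝ) else -1) * b i) ^ 2
      = 2 ^ m * ∑ i, b i ^ 2 := by
  have hcard : (Finset.univ : Finset (Fin m → Bool)).card = 2 ^ m := by simp
  calc ∑ ε : Fin m → Bool, (∑ i, (if ε i then (1:ℝ) else -1) * b i) ^ 2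
      = ∑ ε : Fin m → Bool, ∑ i, ∑ j,
          ((if ε i then (1:ℝ) else -1) * b i) * ((if ε j then (1:ℝ) else -1) * b j) := by
        refine Finset.sum_congr rfl fun ε _ => ?_
        rw [sq, Finset.sum_mul_sum]
    _ = ∑ i, ∑ j, ∑ ε : Fin m → Bool,
          ((if ε i then (1:ℝ) else -1) * b i) * ((if ε j then (1:ℝ) else -1) * b j) := by
        rw [Finset.sum_comm]
        exact Finset.sum_congr rfl fun i _ => Finset.sum_comm
    _ = ∑ i : Fin m, (2:ℝ) ^ m * b i ^ 2 := by
        refine Finset.sum_congr rfl fun i _ => ?_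
        rw [Finset.sum_eq_single i]
        · have : ∀ ε : Fin m → Bool,
              ((if ε i then (1:ℝ) else -1) * b i) * ((if ε i then (1:ℝ) else -1) * b i) = b i ^ 2 := by
            intro ε; cases ε i <;> simp [pow_two]
          rw [Finset.sum_congr rfl (fun ε _ => this ε), Finset.sum_const, hcard]
          simp [mul_comm]
        · intro j _ hji
          have h0 := orth (i := i) (j := j) (fun h => hji (h.symm))
          calc ∑ ε : Fin m → Bool,
                ((if ε i then (1:ℝ) else -1) * b i) * ((if ε j then (1:ℝ) else -1) * b j)
              = (b i * b j) * ∑ ε : Fin m → Bool,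
                  ((if ε i then (1:ℝ) else -1) * (if ε j then (1:ℝ) else -1)) := by
                rw [Finset.mul_sum]; exact Finset.sum_congr rfl fun ε _ => by ring
            _ = 0 := by rw [h0, mul_zero]
        · intro h; exact absurd (Finset.mem_univ i) h
    _ = 2 ^ m * ∑ i, b i ^ 2 := by rw [Finset.mul_sum]

lemma abs_sum_le {m : ℕ} (b : Fin m → ℝ) :
    ∑ ε : Fin m → Bool, |∑ i, (if ε i then (1:ℝ) else -1) * b i|
      ≤ 2 ^ m * Real.sqrt (∑ i, b i ^ 2) := by
  have hcs := sq_sum_le_card_mul_sum_sq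
    (s := (Finset.univ : Finset (Fin m → Bool)))
    (f := fun ε => |∑ i, (if ε i then (1:ℝ) else -1) * b i|)
  simp only [sq_abs] at hcs
  rw [sum_sq_eq] at hcs
  have hcard : ((Finset.univ : Finset (Fin m → Bool)).card : ℝ) = 2 ^ m := by simp
  rw [hcard] at hcs
  have hQ : 0 ≤ ∑ i, b i ^ 2 := Finset.sum_nonneg fun i _ => sq_nonneg _
  have hsq : Real.sqrt (∑ i, b i ^ 2) ^ 2 = ∑ i, b i ^ 2 := Real.sq_sqrt hQ
  have hL : 0 ≤ ∑ ε : Fin m → Bool, |∑ i, (if ε i then (1:ℝ) else -1) * b i| :=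
    Finset.sum_nonneg fun ε _ => abs_nonneg _
  have hR : (0:ℝ) ≤ 2 ^ m * Real.sqrt (∑ i, b i ^ 2) := by positivity
  have key : (∑ ε : Fin m → Bool, |∑ i, (if ε i then (1:ℝ) else -1) * b i|) ^ 2
      ≤ (2 ^ m * Real.sqrt (∑ i, b i ^ 2)) ^ 2 := by
    rw [mul_pow, hsq]; nlinarith [hcs]
  exact le_of_pow_le_pow_left₀ two_ne_zero hR key


lemma f_split_sq (x y : ℝ) : f (x + y) ^ 2 ≤ 2 * f x ^ 2 + 2 * f y ^ 2 := by
  have h1 := f_subadd x y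
  have h2 := f_nonneg (x + y)
  have h3 := f_nonneg x
  have h4 := f_nonneg y
  have hp := mul_self_le_mul_self h2 h1
  nlinarith [sq_nonneg (f x - f y)]

lemma f_sq_le_sq (x : ℝ) : f x ^ 2 ≤ x ^ 2 := by
  have h1 := f_le_abs x
  have h2 := f_nonneg x
  have hp := mul_self_le_mul_self h2 h1
  nlinarith [sq_abs x]

lemma pt_bound {σ : ℝ} (hσ0 : 0 < σ) (x : ℝ) :
    f x ^ 2 ≤ 2 * Real.log (1 + σ) ^ 2 + (2 / σ) * |x| := by
  set T := |x| with hT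
  have hT0 : 0 ≤ T := abs_nonneg _
  have h1 : f x ≤ Real.log (1 + σ) + Real.log (1 + T / σ) := by
    rw [← Real.log_mul (by positivity) (by positivity)]
    unfold f
    apply Real.log_le_log (by positivity)
    have hTσ : (T / σ) * σ = T := by field_simp
    nlinarith [div_nonneg hT0 hσ0.le]
  have h2 : Real.log (1 + T / σ) ^ 2 ≤ T / σ := log_sq_le (by positivity)
  have h3 : 0 ≤ Real.log (1 + σ) := Real.log_nonneg (by linarith)
  have h4 : 0 ≤ Real.log (1 + T / σ) := Real.log_nonneg
    (by have := div_nonneg hT0 hσ0.le; linarith)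
  have h5 : 0 ≤ f x := f_nonneg _
  have h6 : (2 / σ) * T = 2 * (T / σ) := by ring
  have hp := mul_self_le_mul_self h5 h1
  nlinarith [sq_nonneg (Real.log (1 + σ) - Real.log (1 + T / σ))]

lemma exp_bound_vec {m : ℕ} (b : Fin m → ℝ) {σ : ℝ} (hσ0 : 0 < σ)
    (hσsq : σ ^ 2 = ∑ i, b i ^ 2) :
    ∑ ε : Fin m → Bool, f (∑ i, (if ε i then (1:ℝ) else -1) * b i) ^ 2
      ≤ 2 ^ m * (2 * Real.log (1 + σ) ^ 2 + 2) := by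
  have hsqrt : Real.sqrt (∑ i, b i ^ 2) = σ := by
    rw [← hσsq]; exact Real.sqrt_sq hσ0.le
  have habs := abs_sum_le (m := m) b
  rw [hsqrt] at habs
  have hcard : ((Finset.univ : Finset (Fin m → Bool)).card : ℝ) = 2 ^ m := by simp
  calc ∑ ε : Fin m → Bool, f (∑ i, (if ε i then (1:ℝ) else -1) * b i) ^ 2
      ≤ ∑ ε : Fin m → Bool, (2 * Real.log (1 + σ) ^ 2
          + (2 / σ) * |∑ i, (if ε i then (1:ℝ) else -1) * b i|) :=
        Finset.sum_le_sum fun ε _ => pt_bound hσ0 _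
    _ = 2 ^ m * (2 * Real.log (1 + σ) ^ 2)
          + (2 / σ) * ∑ ε : Fin m → Bool, |∑ i, (if ε i then (1:ℝ) else -1) * b i| := by
        rw [Finset.sum_add_distrib, Finset.sum_const, ← Finset.mul_sum]
        rw [nsmul_eq_mul, hcard]
    _ ≤ 2 ^ m * (2 * Real.log (1 + σ) ^ 2) + (2 / σ) * (2 ^ m * σ) := by
        have h2σ : 0 ≤ 2 / σ := by positivity
        have := mul_le_mul_of_nonneg_left habs h2σ
        linarith
    _ = 2 ^ m * (2 * Real.log (1 + σ) ^ 2 + 2) := by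
        field_simp

set_option maxHeartbeats 2000000 in
/-- Expectation over independent Rademacher signs, written as the average over
all `2^m` sign patterns. -/
theorem rademacher_f_sq_bound :
    ∃ C : ℝ, 0 < C ∧ ∀ (m : ℕ) (a : Fin m → ℝ),
      (1 / (2 : ℝ) ^ m) *
          ∑ ε : Fin m → Bool,
            f (∑ i, (if ε i then (1 : ℝ) else -1) * a i) ^ 2 ≤
        C * ∑ i, f (a i) ^ 2 := by
  refine ⟨100, by norm_num, ?_⟩
  intro m a
  have hln2 : (0.6931:ℝ) < Real.log 2 := by
    have := Real.log_two_gt_d9; linarith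
  set bB : Fin m → ℝ := fun i => if 1 < |a i| then a i else 0 with hbB
  set bS : Fin m → ℝ := fun i => if 1 < |a i| then 0 else a i with hbS
  set Sf := ∑ i, f (a i) ^ 2 with hSf
  have hSf0 : 0 ≤ Sf := Finset.sum_nonneg fun i _ => sq_nonneg _
  have hpow : (0:ℝ) < 2 ^ m := by positivity
  have hsplit : ∀ ε : Fin m → Bool,
      (∑ i, (if ε i then (1:ℝ) else -1) * a i)
        = (∑ i, (if ε i then (1:ℝ) else -1) * bB i)
          + (∑ i, (if ε i then (1:ℝ) else -1) * bS i) := by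
    intro ε
    rw [← Finset.sum_add_distrib]
    refine Finset.sum_congr rfl fun i _ => ?_
    by_cases h : 1 < |a i| <;> simp [hbB, hbS, h] <;> ring
  -- Small part
  have hbS_sq : ∀ i, bS i ^ 2 ≤ 3 * f (a i) ^ 2 := by
    intro i
    by_cases h : 1 < |a i|
    · simp only [hbS, if_pos h]
      have := sq_nonneg (f (a i))
      nlinarith
    · push_neg at h
      have hlb := f_lb_small h
      have h0 := abs_nonneg (a i)
      have hbsi : bS i = a i := by simp [hbS, not_lt.mpr h]
      rw [hbsi]
      have hsq : (a i)^2 = |a i|^2 := (sq_abs _).symm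
      have hmul := mul_self_le_mul_self (by positivity : (0:ℝ) ≤ Real.log 2 * |a i|) hlb
      nlinarith [f_nonneg (a i), sq_nonneg (Real.log 2 - 0.6931)]
  have hsmall : ∑ ε : Fin m → Bool, f (∑ i, (if ε i then (1:ℝ) else -1) * bS i) ^ 2
      ≤ 2 ^ m * (3 * Sf) := by
    have h3 : ∑ i, bS i ^ 2 ≤ 3 * Sf := by
      rw [hSf, Finset.mul_sum]
      exact Finset.sum_le_sum fun i _ => hbS_sq i
    calc ∑ ε : Fin m → Bool, f (∑ i, (if ε i then (1:ℝ) else -1) * bS i) ^ 2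
        ≤ ∑ ε : Fin m → Bool, (∑ i, (if ε i then (1:ℝ) else -1) * bS i) ^ 2 :=
          Finset.sum_le_sum fun ε _ => f_sq_le_sq _
      _ = 2 ^ m * ∑ i, bS i ^ 2 := sum_sq_eq bS
      _ ≤ 2 ^ m * (3 * Sf) := mul_le_mul_of_nonneg_left h3 hpow.le
  -- Big part
  have hbig : ∑ ε : Fin m → Bool, f (∑ i, (if ε i then (1:ℝ) else -1) * bB i) ^ 2
      ≤ 2 ^ m * (40 * Sf) := by
    by_cases hB : ∀ i, ¬ (1 < |a i|)
    · have hz : ∀ ε : Fin m → Bool, (∑ i, (if ε i then (1:ℝ) else -1) * bB i) = 0 := by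
        intro ε
        refine Finset.sum_eq_zero fun i _ => ?_
        simp [hbB, hB i]
      have hzz : ∑ ε : Fin m → Bool, f (∑ i, (if ε i then (1:ℝ) else -1) * bB i) ^ 2 = 0 := by
        refine Finset.sum_eq_zero fun ε _ => ?_
        rw [hz ε]; simp [f]
      rw [hzz]; positivity
    · push_neg at hB
      obtain ⟨j0, hj0⟩ := hB
      set B : Finset (Fin m) := Finset.univ.filter (fun i => 1 < |a i|) with hBdef
      have hj0B : j0 ∈ B := by simp [hBdef, hj0]
      obtain ⟨j, hjB, hjmax⟩ := B.exists_max_image (fun i => (a i)^2) ⟨j0, hj0B⟩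
      have hjbig : 1 < |a j| := by simpa [hBdef] using hjB
      set Q := ∑ i, bB i ^ 2 with hQdef
      have hQB : Q = ∑ i ∈ B, a i ^ 2 := by
        rw [hQdef, hBdef, Finset.sum_filter]
        refine Finset.sum_congr rfl fun i _ => ?_
        by_cases h : 1 < |a i| <;> simp [hbB, h]
      have hQ0 : 0 ≤ Q := Finset.sum_nonneg fun i _ => sq_nonneg _
      have hQ1 : 1 ≤ Q := by
        have h1 : (a j0) ^ 2 ≤ ∑ i ∈ B, a i ^ 2 :=
          Finset.single_le_sum (f := fun i => a i ^ 2) (fun i _ => sq_nonneg _) hj0B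
        rw [hQB]
        nlinarith [sq_abs (a j0)]
      set σ := Real.sqrt Q with hσdef
      have hσsq : σ ^ 2 = Q := Real.sq_sqrt hQ0
      have hσ1 : 1 ≤ σ := by
        rw [hσdef]
        have := Real.sqrt_le_sqrt hQ1
        simpa using this
      have hσ0 : 0 < σ := by linarith
      have hσQ : σ ≤ Q := by
        nlinarith [mul_nonneg (by linarith : (0:ℝ) ≤ σ - 1) (by linarith : (0:ℝ) ≤ σ)]
      -- deterministic bound
      have hdet : 2 * Real.log (1 + σ) ^ 2 + 2 ≤ 40 * Sf := by
        set k := (B.card : ℝ) with hk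
        have hk1 : (1:ℝ) ≤ k := by
          have hc : 0 < B.card := Finset.card_pos.mpr ⟨j0, hj0B⟩
          rw [hk]
          exact_mod_cast hc
        have hQk : Q ≤ k * (a j) ^ 2 := by
          rw [hQB]
          calc ∑ i ∈ B, a i ^ 2 ≤ ∑ _i ∈ B, (a j) ^ 2 :=
                Finset.sum_le_sum fun i hi => hjmax i hi
            _ = k * (a j) ^ 2 := by rw [Finset.sum_const, nsmul_eq_mul]
        have haj0 : 0 ≤ (a j)^2 := sq_nonneg _
        have h1 : Real.log (1 + σ) ≤ Real.log (1 + Q) :=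
          Real.log_le_log (by linarith) (by linarith)
        have h2 : Real.log (1 + Q) ≤ Real.log (2 * k) + Real.log (1 + (a j)^2) := by
          rw [← Real.log_mul (by positivity) (by positivity)]
          apply Real.log_le_log (by linarith)
          nlinarith
        have h3 : Real.log (1 + (a j)^2) ≤ 2 * f (a j) := by
          have hle : 1 + (a j)^2 ≤ (1 + |a j|)^2 := by nlinarith [abs_nonneg (a j), sq_abs (a j)]
          calc Real.log (1 + (a j)^2) ≤ Real.log ((1 + |a j|)^2) :=
                Real.log_le_log (by positivity) hle
            _ = 2 * Real.log (1 + |a j|) := by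
                rw [Real.log_pow]; push_cast; ring
            _ = 2 * f (a j) := rfl
        have h4 : Real.log (2 * k) ^ 2 ≤ 2 * k := by
          have h4' := log_sq_le (t := 2 * k - 1) (by linarith)
          rw [show (1:ℝ) + (2 * k - 1) = 2 * k by ring] at h4'
          linarith
        have h5 : k * (Real.log 2)^2 ≤ Sf := by
          have hsub : ∑ i ∈ B, f (a i) ^ 2 ≤ Sf := by
            rw [hSf]
            exact Finset.sum_le_sum_of_subset_of_nonneg (Finset.subset_univ B)
              (fun i _ _ => sq_nonneg _)
          have hlow : k * (Real.log 2)^2 ≤ ∑ i ∈ B, f (a i) ^ 2 := by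
            calc k * (Real.log 2)^2 = ∑ _i ∈ B, (Real.log 2)^2 := by
                  rw [Finset.sum_const, nsmul_eq_mul]
              _ ≤ ∑ i ∈ B, f (a i) ^ 2 := by
                  refine Finset.sum_le_sum fun i hi => ?_
                  have hbigi : 1 < |a i| := by simpa [hBdef] using hi
                  have := f_lb_big hbigi
                  nlinarith [f_nonneg (a i), Real.log_pos (by norm_num : (1:ℝ) < 2)]
          linarith
        have h6 : f (a j) ^ 2 ≤ Sf := by
          rw [hSf]
          exact Finset.single_le_sum (f := fun i => f (a i) ^ 2)
            (fun i _ => sq_nonneg _) (Finset.mem_univ j)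
        have h7 : (Real.log 2)^2 ≤ f (a j) ^ 2 := by
          have := f_lb_big hjbig
          nlinarith [Real.log_pos (by norm_num : (1:ℝ) < 2)]
        have hL1 : 0 ≤ Real.log (1 + σ) := Real.log_nonneg (by linarith)
        have hL2 : 0 ≤ Real.log (2 * k) := Real.log_nonneg (by linarith)
        have hF : 0 ≤ f (a j) := f_nonneg _
        have hlog2sq : (0.48:ℝ) ≤ (Real.log 2)^2 := by nlinarith
        have h12 : Real.log (1 + σ) ≤ Real.log (2 * k) + 2 * f (a j) := by linarith
        have hsq12 : Real.log (1 + σ) ^ 2 ≤ 2 * Real.log (2 * k) ^ 2 + 8 * f (a j) ^ 2 := by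
          have hp := mul_self_le_mul_self hL1 h12
          nlinarith [sq_nonneg (Real.log (2 * k) - 2 * f (a j))]
        have hkSf : 4 * k ≤ 9 * Sf := by
          have hm : k * 0.48 ≤ k * (Real.log 2)^2 :=
            mul_le_mul_of_nonneg_left hlog2sq (by linarith)
          linarith
        have h2' : (2:ℝ) ≤ 5 * Sf := by linarith
        linarith
      calc ∑ ε : Fin m → Bool, f (∑ i, (if ε i then (1:ℝ) else -1) * bB i) ^ 2
          ≤ 2 ^ m * (2 * Real.log (1 + σ) ^ 2 + 2) := exp_bound_vec bB hσ0 (hσsq.trans hQdef)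
        _ ≤ 2 ^ m * (40 * Sf) := mul_le_mul_of_nonneg_left hdet hpow.le
  -- Total
  have htot : ∑ ε : Fin m → Bool, f (∑ i, (if ε i then (1:ℝ) else -1) * a i) ^ 2
      ≤ 2 ^ m * (100 * Sf) := by
    calc ∑ ε : Fin m → Bool, f (∑ i, (if ε i then (1:ℝ) else -1) * a i) ^ 2
        ≤ ∑ ε : Fin m → Bool, (2 * f (∑ i, (if ε i then (1:ℝ) else -1) * bB i) ^ 2
            + 2 * f (∑ i, (if ε i then (1:ℝ) else -1) * bS i) ^ 2) := by
          refine Finset.sum_le_sum fun ε _ => ?_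
          rw [hsplit ε]
          exact f_split_sq _ _
      _ = 2 * ∑ ε : Fin m → Bool, f (∑ i, (if ε i then (1:ℝ) else -1) * bB i) ^ 2
            + 2 * ∑ ε : Fin m → Bool, f (∑ i, (if ε i then (1:ℝ) else -1) * bS i) ^ 2 := by
          rw [Finset.sum_add_distrib, Finset.mul_sum, Finset.mul_sum]
      _ ≤ 2 * (2 ^ m * (40 * Sf)) + 2 * (2 ^ m * (3 * Sf)) := by
          linarith [hbig, hsmall]
      _ ≤ 2 ^ m * (100 * Sf) := by nlinarith [mul_nonneg hpow.le hSf0]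
  rw [div_mul_eq_mul_div, one_mul, div_le_iff₀ hpow]
  calc ∑ ε : Fin m → Bool, f (∑ i, (if ε i then (1:ℝ) else -1) * a i) ^ 2
      ≤ 2 ^ m * (100 * Sf) := htot
    _ = 100 * Sf * 2 ^ m := by ring
end

section
/- The function x ↦ ln²(1+x)/x² is strictly decreasing on (0,∞). -/
lemma log_div_aux {x y : ℝ} (hx : 0 < x) (hxy : x < y) :
    Real.log (1 + y) / y < Real.log (1 + x) / x := by
  have hy : 0 < y := hx.trans hxy
  have hb : 0 < x / y := div_pos hx hy
  have ha : 0 < 1 - x / y := by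
    have : x / y < 1 := (div_lt_one hy).2 hxy
    linarith
  have h := strictConcaveOn_log_Ioi.2 (Set.mem_Ioi.2 one_pos)
    (Set.mem_Ioi.2 (by linarith : (0:ℝ) < 1 + y)) (by linarith) ha hb (by ring)
  have hcomb : (1 - x / y) • (1:ℝ) + (x / y) • (1 + y) = 1 + x := by
    field_simp
    simp only [smul_eq_mul]
    rw [div_mul_eq_mul_div, div_mul_eq_mul_div, ← add_div, div_eq_iff hy.ne']; ring
  rw [hcomb, Real.log_one, smul_zero, zero_add, smul_eq_mul] at h
  rw [div_lt_div_iff₀ hy hx]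
  calc Real.log (1 + y) * x = x / y * Real.log (1 + y) * y := by
        field_simp
    _ < Real.log (1 + x) * y := by
        exact mul_lt_mul_of_pos_right h hy

theorem log_sq_div_sq_strictAnti :
    StrictAntiOn (fun x : ℝ => Real.log (1 + x) ^ 2 / x ^ 2) (Set.Ioi 0) := by
  intro x hx y hy hxy
  simp only [Set.mem_Ioi] at hx hy
  have h := log_div_aux hx hxy
  have hposy : 0 < Real.log (1 + y) / y := by
    apply div_pos _ (hx.trans hxy)
    apply Real.log_pos; linarith
  have := pow_lt_pow_left₀ h hposy.le two_ne_zero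
  simpa [div_pow] using this
end

section
/- Let p₁,…,pₙ be a probability distribution with pᵢ ≥ c·‖Gᵢ‖₂²/‖G‖_F² for all i with Gᵢ ≠ 0, where G ∈ ℝ^{n×d} has rows Gᵢ and c ∈ (0,1]. Let X be the random vector taking value (u_t)ᵢ/pᵢ · Gᵢ with probability pᵢ, where u_t is a fixed unit vector in ℝⁿ (a left singular vector of G). Then E[X] = σ_t v_tᵀ (where G u_t-image gives σ_t v_t) and E[‖X‖₂²] ≤ ‖G‖_F²/c. -/
/-- Norm-sampling moment bounds (Frieze–Kannan–Vempala): sampling row `Gᵢ`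
scaled by `uᵢ/pᵢ` with probability `pᵢ ≥ c ‖Gᵢ‖²/‖G‖_F²` gives an unbiased
estimator of `uᵀG` (which equals `σ_t v_tᵀ` when `u` is a left singular vector)
with second moment at most `‖G‖_F²/c`. -/
theorem fkv_sampling_moments (n d : ℕ)
    (G : Matrix (Fin n) (Fin d) ℝ) (hG : G ≠ 0)
    (p : Fin n → ℝ) (hp0 : ∀ i, 0 ≤ p i) (hp1 : ∑ i, p i = 1)
    (c : ℝ) (hc0 : 0 < c) (hc1 : c ≤ 1)
    (hp : ∀ i, G i ≠ 0 →
      c * (∑ j, G i j ^ 2) / (∑ i', ∑ j, G i' j ^ 2) ≤ p i)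
    (u : Fin n → ℝ) (hu : ∑ i, u i ^ 2 = 1) :
    (∀ j, ∑ i, p i * (u i / p i * G i j) = Matrix.vecMul u G j) ∧
    (∑ i, p i * ((u i / p i) ^ 2 * ∑ j, G i j ^ 2) ≤
      (∑ i', ∑ j, G i' j ^ 2) / c) := by
  set F : ℝ := ∑ i', ∑ j, G i' j ^ 2 with hF
  have hSnn : ∀ i, (0:ℝ) ≤ ∑ j, G i j ^ 2 := fun i =>
    Finset.sum_nonneg fun j _ => sq_nonneg _
  have hFpos : 0 < F := by
    rcases lt_or_eq_of_le (Finset.sum_nonneg fun i _ => hSnn i) with h | h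
    · exact h
    · exfalso; apply hG
      ext i j
      have h1 : ∑ j, G i j ^ 2 = 0 := by
        have := (Finset.sum_eq_zero_iff_of_nonneg (fun i _ => hSnn i)).mp h.symm
        exact this i (Finset.mem_univ i)
      have h2 := (Finset.sum_eq_zero_iff_of_nonneg (fun j _ => sq_nonneg (G i j))).mp h1
      have := h2 j (Finset.mem_univ j)
      simpa [pow_eq_zero_iff] using this
  have hppos : ∀ i, G i ≠ 0 → 0 < p i := by
    intro i hi
    refine lt_of_lt_of_le ?_ (hp i hi)
    apply div_pos (mul_pos hc0 ?_) hFpos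
    rcases lt_or_eq_of_le (hSnn i) with h | h
    · exact h
    · exfalso; apply hi; ext j
      have := (Finset.sum_eq_zero_iff_of_nonneg (fun j _ => sq_nonneg (G i j))).mp h.symm
      simpa [pow_eq_zero_iff] using this j (Finset.mem_univ j)
  constructor
  · intro j
    rw [Matrix.vecMul, dotProduct]
    apply Finset.sum_congr rfl
    intro i _
    by_cases hi : G i = 0
    · simp [show G i j = 0 from congrFun hi j]
    · have := (hppos i hi).ne'
      field_simp [Matrix.transpose_apply]
  · have key : ∀ i, p i * ((u i / p i) ^ 2 * ∑ j, G i j ^ 2) ≤ u i ^ 2 * (F / c) := by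
      intro i
      by_cases hi : G i = 0
      · have : ∑ j, G i j ^ 2 = 0 := by
          apply Finset.sum_eq_zero; intro j _
          simp [show G i j = 0 from congrFun hi j]
        rw [this, mul_zero, mul_zero]
        positivity
      · have hpi := hppos i hi
        have h1 : p i * ((u i / p i) ^ 2 * ∑ j, G i j ^ 2)
            = u i ^ 2 * ((∑ j, G i j ^ 2) / p i) := by
          field_simp
        rw [h1]
        apply mul_le_mul_of_nonneg_left _ (sq_nonneg _)
        rw [div_le_div_iff₀ hpi hc0]
        have h2 := hp i hi
        have h3 : c * (∑ j, G i j ^ 2) ≤ p i * F := (div_le_iff₀ hFpos).mp h2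
        linarith
    calc ∑ i, p i * ((u i / p i) ^ 2 * ∑ j, G i j ^ 2)
        ≤ ∑ i, u i ^ 2 * (F / c) := Finset.sum_le_sum fun i _ => key i
      _ = F / c := by rw [← Finset.sum_mul, hu, one_mul]
end
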